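/- Let A be a groupoid with finite automorphism groups and finitely many isomorphism classes, and let φ : A → R be a function on isomorphism classes with values in a commutative ring, extended multiplicatively to Sym_n(A) by φ(x₁,…,xₙ) = φ(x₁)⋯φ(xₙ). Then Σ_{[ξ] ∈ Sym_n(𝒜)} φ(ξ)/|Aut_{Sym_n(A)} ξ| = (1/n!) · (Σ_{[x] ∈ 𝒜} φ(x)/|Aut x|)^n. -/

import Mathlib

open CategoryTheory

private theorem eqToHom_heq_id {C : Type*} [Category C] {a b : C}
    (p : a = b) : HEq (eqToHom p) (𝟙 a) := by
  cases p; rfl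

/-- The objects of the symmetric power groupoid `Sym_n(A)`. -/
structure SymObj (A : Type*) (n : ℕ) where
  obj : Fin n → A

/-- The symmetric power groupoid `Sym_n(A) = A^{×n}/S_n`. -/
instance symGroupoid (A : Type*) [Groupoid A] (n : ℕ) : Groupoid (SymObj A n) where
  Hom x y := (σ : Equiv.Perm (Fin n)) × (∀ i, x.obj i ⟶ y.obj (σ i))
  id x := ⟨1, fun i => 𝟙 (x.obj i)⟩
  comp f g := ⟨g.1 * f.1, fun i => f.2 i ≫ g.2 (f.1 i)⟩
  id_comp f := by cases f; exact Sigma.ext (mul_one _) (Function.hfunext rfl fun i j hij => by cases hij; simp)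
  comp_id f := by cases f; exact Sigma.ext (one_mul _) (Function.hfunext rfl fun i j hij => by cases hij; simp)
  assoc f g h := by cases f; cases g; cases h; exact Sigma.ext (mul_assoc _ _ _).symm (Function.hfunext rfl fun i j hij => by cases hij; simp)
  inv f := ⟨f.1⁻¹, fun i =>
    eqToHom (congrArg _ (f.1.apply_symm_apply i).symm) ≫ Groupoid.inv (f.2 (f.1⁻¹ i))⟩
  inv_comp f := by
    rcases f with ⟨σ, f⟩
    have h1 : σ * σ⁻¹ = 1 := by group
    refine Sigma.ext h1 (Function.hfunext rfl fun i j hij => ?_)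
    obtain rfl : i = j := eq_of_heq hij
    simp only [CategoryTheory.Category.assoc]
    simpa using eqToHom_heq_id _
  comp_inv f := by
    rcases f with ⟨σ, f⟩
    have h1 : σ⁻¹ * σ = 1 := by group
    refine Sigma.ext h1 (Function.hfunext rfl fun i j hij => ?_)
    obtain rfl : i = j := eq_of_heq hij
    simp only [CategoryTheory.Category.assoc]
    simpa using eqToHom_heq_id _


section Aux

open MulAction

theorem homFinite {A : Type*} [Groupoid A] [∀ a : A, Finite (a ⟶ a)] (x y : A) :
    Finite (x ⟶ y) := by
  rcases isEmpty_or_nonempty (x ⟶ y) with h | hf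
  · infer_instance
  · obtain ⟨f⟩ := hf
    exact Finite.of_equiv (x ⟶ x)
      ⟨fun g => g ≫ f, fun g => g ≫ Groupoid.inv f, fun g => by simp, fun g => by simp⟩

instance symHomFinite {A : Type*} [Groupoid A] [∀ a : A, Finite (a ⟶ a)] (n : ℕ)
    (x y : SymObj A n) : Finite (x ⟶ y) := by
  have : ∀ u v : A, Finite (u ⟶ v) := homFinite
  show Finite ((σ : Equiv.Perm (Fin n)) × (∀ i, x.obj i ⟶ y.obj (σ i)))
  infer_instance

instance permSMul (n : ℕ) (Q : Type*) : SMul (Equiv.Perm (Fin n)) (Fin n → Q) :=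
  ⟨fun σ c => c ∘ ⇑σ⁻¹⟩

theorem permSMul_def {n : ℕ} {Q : Type*} (σ : Equiv.Perm (Fin n)) (c : Fin n → Q) :
    σ • c = c ∘ ⇑σ⁻¹ := rfl

instance permMulAction (n : ℕ) (Q : Type*) : MulAction (Equiv.Perm (Fin n)) (Fin n → Q) where
  one_smul c := by ext i; simp [permSMul_def]
  mul_smul σ τ c := by ext i; simp [permSMul_def, Function.comp, mul_assoc]

theorem cardAutCongr {C : Type*} [Category C] {x y : C} (e : x ≅ y) :
    Nat.card (x ⟶ x) = Nat.card (y ⟶ y) := Nat.card_congr (e.homCongr e)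

theorem natCardSigma {ι : Type*} [Fintype ι] (f : ι → Type*) [∀ i, Finite (f i)] :
    Nat.card ((i : ι) × f i) = ∑ i, Nat.card (f i) := by
  letI : ∀ i, Fintype (f i) := fun i => Fintype.ofFinite _
  simp [Nat.card_eq_fintype_card]

theorem prodPhiCongr {A : Type*} [Groupoid A] {n : ℕ} (φ : A → ℂ)
    (hφ : ∀ x x' : A, (x ≅ x') → φ x = φ x') {x y : SymObj A n} (f : x ⟶ y) :
    ∏ i, φ (x.obj i) = ∏ i, φ (y.obj i) := by
  obtain ⟨σ, g⟩ := f
  calc ∏ i, φ (x.obj i) = ∏ i, φ (y.obj (σ i)) :=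
        Finset.prod_congr rfl fun i _ => hφ _ _ ((Groupoid.isoEquivHom _ _).symm (g i))
    _ = ∏ i, φ (y.obj i) := Equiv.prod_comp σ fun j => φ (y.obj j)

set_option maxHeartbeats 1000000 in
theorem keyFiber {A : Type*} [Groupoid A] [∀ a : A, Finite (a ⟶ a)] {n : ℕ}
    [Fintype (_root_.Quotient (isIsomorphicSetoid A))]
    (φ : A → ℂ) (hφ : ∀ x x' : A, (x ≅ x') → φ x = φ x')
    (repA : _root_.Quotient (isIsomorphicSetoid A) → A)
    (hrepA : ∀ q, Quotient.mk (isIsomorphicSetoid A) (repA q) = q)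
    (ξ : SymObj A n)
    [DecidablePred fun c : Fin n → _root_.Quotient (isIsomorphicSetoid A) =>
      Quotient.mk (isIsomorphicSetoid (SymObj A n)) (⟨fun i => repA (c i)⟩ : SymObj A n) =
        Quotient.mk (isIsomorphicSetoid (SymObj A n)) ξ] :
    (Nat.card (ξ ⟶ ξ) : ℂ)⁻¹ * ∏ i, φ (ξ.obj i) =
      (n.factorial : ℂ)⁻¹ *
        ∑ c ∈ Finset.univ.filter (fun c : Fin n → _root_.Quotient (isIsomorphicSetoid A) =>
            Quotient.mk (isIsomorphicSetoid (SymObj A n)) ⟨fun i => repA (c i)⟩ =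
              Quotient.mk (isIsomorphicSetoid (SymObj A n)) ξ),
          ∏ i, ((Nat.card (repA (c i) ⟶ repA (c i)) : ℂ)⁻¹ * φ (repA (c i))) := by
  classical
  have hfin : ∀ u v : A, Finite (u ⟶ v) := homFinite
  set c₀ : Fin n → _root_.Quotient (isIsomorphicSetoid A) :=
    fun i => Quotient.mk (isIsomorphicSetoid A) (ξ.obj i) with hc₀
  have hiso : ∀ i, repA (c₀ i) ≅ ξ.obj i := fun i =>
    Nonempty.some (Quotient.exact (hrepA (c₀ i) :
      Quotient.mk (isIsomorphicSetoid A) (repA (c₀ i)) =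
        Quotient.mk (isIsomorphicSetoid A) (ξ.obj i)))
  set ξ₀ : SymObj A n := ⟨fun i => repA (c₀ i)⟩ with hξ₀
  have f₀ : ξ₀ ⟶ ξ := ⟨1, fun i => (hiso i).hom⟩
  have e₀ : ξ₀ ≅ ξ := (Groupoid.isoEquivHom _ _).symm f₀
  set P : ℕ := ∏ i, Nat.card (repA (c₀ i) ⟶ repA (c₀ i)) with hP
  -- cardinality of Aut ξ
  have hmem : ∀ σ : Equiv.Perm (Fin n),
      (c₀ ∘ ⇑σ = c₀) ↔ σ ∈ stabilizer (Equiv.Perm (Fin n)) c₀ := by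
    intro σ
    rw [mem_stabilizer_iff]
    constructor
    · intro h
      ext i
      have := congrFun h (σ⁻¹ i)
      simpa [permSMul_def, Function.comp] using this.symm
    · intro h
      ext i
      have := congrFun h (σ i)
      simpa [permSMul_def, Function.comp] using this.symm
  have hcard : Nat.card (ξ ⟶ ξ) =
      Nat.card (stabilizer (Equiv.Perm (Fin n)) c₀) * P := by
    rw [cardAutCongr e₀.symm]
    have h1 : Nat.card (ξ₀ ⟶ ξ₀) =
        ∑ σ : Equiv.Perm (Fin n), ∏ i, Nat.card (repA (c₀ i) ⟶ repA (c₀ (σ i))) := by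
      calc Nat.card (ξ₀ ⟶ ξ₀)
          = Nat.card ((σ : Equiv.Perm (Fin n)) × (∀ i, ξ₀.obj i ⟶ ξ₀.obj (σ i))) := rfl
        _ = ∑ σ : Equiv.Perm (Fin n), Nat.card (∀ i, ξ₀.obj i ⟶ ξ₀.obj (σ i)) :=
            natCardSigma _
        _ = ∑ σ : Equiv.Perm (Fin n), ∏ i, Nat.card (repA (c₀ i) ⟶ repA (c₀ (σ i))) := by
            refine Finset.sum_congr rfl fun σ _ => ?_
            rw [Nat.card_pi]
    have hterm : ∀ σ : Equiv.Perm (Fin n),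
        (∏ i, Nat.card (repA (c₀ i) ⟶ repA (c₀ (σ i)))) =
          if c₀ ∘ ⇑σ = c₀ then P else 0 := by
      intro σ
      by_cases h : c₀ ∘ ⇑σ = c₀
      · rw [if_pos h]
        refine Finset.prod_congr rfl fun i _ => ?_
        have h2 : c₀ (σ i) = c₀ i := congrFun h i
        rw [h2]
      · rw [if_neg h]
        obtain ⟨i, hi⟩ := Function.ne_iff.mp h
        refine Finset.prod_eq_zero (Finset.mem_univ i) ?_
        have : IsEmpty (repA (c₀ i) ⟶ repA (c₀ (σ i))) := by
          constructor
          intro f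
          apply hi
          have e : repA (c₀ i) ≅ repA (c₀ (σ i)) := (Groupoid.isoEquivHom _ _).symm f
          have h2 : Quotient.mk (isIsomorphicSetoid A) (repA (c₀ i)) =
              Quotient.mk (isIsomorphicSetoid A) (repA (c₀ (σ i))) := Quotient.sound ⟨e⟩
          rw [hrepA, hrepA] at h2
          exact h2.symm
        simp [Nat.card_eq_zero_of_infinite, Nat.card_of_isEmpty]
    rw [h1, Finset.sum_congr rfl fun σ _ => hterm σ, ← Finset.sum_filter]
    rw [Finset.sum_const, smul_eq_mul]
    congr 1
    rw [Nat.card_eq_fintype_card]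
    rw [Fintype.card_eq_nat_card, Nat.card_eq_fintype_card]
    rw [← Fintype.card_subtype]
    exact Fintype.card_congr (Equiv.subtypeEquiv (Equiv.refl _) fun σ => hmem σ)
  -- the fiber is the orbit of c₀
  letI : Fintype (orbit (Equiv.Perm (Fin n)) c₀) := Fintype.ofFinite _
  letI : Fintype (stabilizer (Equiv.Perm (Fin n)) c₀) := Fintype.ofFinite _
  have hfib : (Finset.univ.filter (fun c : Fin n → _root_.Quotient (isIsomorphicSetoid A) =>
      Quotient.mk (isIsomorphicSetoid (SymObj A n)) ⟨fun i => repA (c i)⟩ =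
        Quotient.mk (isIsomorphicSetoid (SymObj A n)) ξ)) =
      (orbit (Equiv.Perm (Fin n)) c₀).toFinset := by
    ext c
    simp only [Finset.mem_filter, Finset.mem_univ, true_and, Set.mem_toFinset,
      mem_orbit_iff]
    constructor
    · intro h
      obtain ⟨e⟩ : Nonempty ((⟨fun i => repA (c i)⟩ : SymObj A n) ≅ ξ) := Quotient.exact h
      obtain ⟨σ, f⟩ := (Groupoid.isoEquivHom _ _) e
      refine ⟨σ⁻¹, ?_⟩
      ext i
      show c₀ ((σ⁻¹)⁻¹ i) = c i
      rw [inv_inv]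
      have e2 : repA (c i) ≅ ξ.obj (σ i) := (Groupoid.isoEquivHom _ _).symm (f i)
      have h2 : Quotient.mk (isIsomorphicSetoid A) (repA (c i)) =
          Quotient.mk (isIsomorphicSetoid A) (ξ.obj (σ i)) := Quotient.sound ⟨e2⟩
      rw [hrepA] at h2
      exact h2.symm
    · rintro ⟨τ, rfl⟩
      apply Quotient.sound
      refine ⟨(Groupoid.isoEquivHom _ _).symm ?_⟩
      exact (⟨τ⁻¹, fun i => (hiso (τ⁻¹ i)).hom⟩ :
        ((⟨fun i => repA ((τ • c₀) i)⟩ : SymObj A n) ⟶ ξ))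
  -- sum over the fiber
  have hsum : ∑ c ∈ Finset.univ.filter (fun c : Fin n → _root_.Quotient (isIsomorphicSetoid A) =>
      Quotient.mk (isIsomorphicSetoid (SymObj A n)) ⟨fun i => repA (c i)⟩ =
        Quotient.mk (isIsomorphicSetoid (SymObj A n)) ξ),
      ∏ i, ((Nat.card (repA (c i) ⟶ repA (c i)) : ℂ)⁻¹ * φ (repA (c i))) =
      (Nat.card (orbit (Equiv.Perm (Fin n)) c₀) : ℂ) *
        ∏ i, ((Nat.card (repA (c₀ i) ⟶ repA (c₀ i)) : ℂ)⁻¹ * φ (repA (c₀ i))) := by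
    rw [hfib]
    have hcc : ∀ c ∈ (orbit (Equiv.Perm (Fin n)) c₀).toFinset,
        (∏ i, ((Nat.card (repA (c i) ⟶ repA (c i)) : ℂ)⁻¹ * φ (repA (c i)))) =
        ∏ i, ((Nat.card (repA (c₀ i) ⟶ repA (c₀ i)) : ℂ)⁻¹ * φ (repA (c₀ i))) := by
      intro c hc
      rw [Set.mem_toFinset, mem_orbit_iff] at hc
      obtain ⟨τ, rfl⟩ := hc
      exact Equiv.prod_comp τ⁻¹ fun j =>
        (Nat.card (repA (c₀ j) ⟶ repA (c₀ j)) : ℂ)⁻¹ * φ (repA (c₀ j))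
    rw [Finset.sum_congr rfl hcc, Finset.sum_const, nsmul_eq_mul, Set.toFinset_card,
      Nat.card_eq_fintype_card]
  -- orbit-stabilizer
  have hOS : Nat.card (orbit (Equiv.Perm (Fin n)) c₀) *
      Nat.card (stabilizer (Equiv.Perm (Fin n)) c₀) = n.factorial := by
    rw [Nat.card_eq_fintype_card, Nat.card_eq_fintype_card,
      card_orbit_mul_card_stabilizer_eq_card_group, Fintype.card_perm, Fintype.card_fin]
  -- products of φ agree
  have hΦ : ∏ i, φ (ξ.obj i) = ∏ i, φ (repA (c₀ i)) := (prodPhiCongr φ hφ f₀).symm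
  -- nonvanishing
  have hPpos : 0 < P := Finset.prod_pos fun i _ => Nat.card_pos
  have hSpos : 0 < Nat.card (stabilizer (Equiv.Perm (Fin n)) c₀) := Nat.card_pos
  have hOpos : 0 < Nat.card (orbit (Equiv.Perm (Fin n)) c₀) := by
    have : Nonempty (orbit (Equiv.Perm (Fin n)) c₀) := ⟨⟨c₀, mem_orbit_self c₀⟩⟩
    exact Nat.card_pos
  -- final algebra
  rw [hcard, hΦ, hsum]
  have hsplit : ∏ i, ((Nat.card (repA (c₀ i) ⟶ repA (c₀ i)) : ℂ)⁻¹ * φ (repA (c₀ i))) =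
      (P : ℂ)⁻¹ * ∏ i, φ (repA (c₀ i)) := by
    rw [Finset.prod_mul_distrib, hP]
    push_cast
    rw [Finset.prod_inv_distrib]
  rw [hsplit, ← hOS]
  have hPc : (P : ℂ) ≠ 0 := Nat.cast_ne_zero.mpr hPpos.ne'
  have hSc : (Nat.card (stabilizer (Equiv.Perm (Fin n)) c₀) : ℂ) ≠ 0 :=
    Nat.cast_ne_zero.mpr hSpos.ne'
  have hOc : (Nat.card (orbit (Equiv.Perm (Fin n)) c₀) : ℂ) ≠ 0 :=
    Nat.cast_ne_zero.mpr hOpos.ne'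
  have key : ∀ o s p f : ℂ, o ≠ 0 → (s * p)⁻¹ * f = (o * s)⁻¹ * (o * (p⁻¹ * f)) := by
    intro o s p f ho
    rw [mul_inv, mul_inv]
    have h1 : o⁻¹ * o = 1 := inv_mul_cancel₀ ho
    calc s⁻¹ * p⁻¹ * f = (o⁻¹ * o) * (s⁻¹ * (p⁻¹ * f)) := by rw [h1]; ring
      _ = o⁻¹ * s⁻¹ * (o * (p⁻¹ * f)) := by ring
  push_cast
  exact key _ _ _ _ hOc

end Aux

/-- Integrating the multiplicative extension of `φ` over `Sym_n(A)` gives `1/n!`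
times the `n`-th power of the integral of `φ` over `A`. -/
theorem symPower_integral {A : Type*} [Groupoid A] [∀ a : A, Finite (a ⟶ a)]
    [Finite (Quotient (isIsomorphicSetoid A))] (n : ℕ)
    [Finite (Quotient (isIsomorphicSetoid (SymObj A n)))]
    (φ : A → ℂ) (hφ : ∀ x x' : A, (x ≅ x') → φ x = φ x')
    (repA : Quotient (isIsomorphicSetoid A) → A)
    (hrepA : ∀ q, Quotient.mk (isIsomorphicSetoid A) (repA q) = q)
    (repS : Quotient (isIsomorphicSetoid (SymObj A n)) → SymObj A n)
    (hrepS : ∀ q, Quotient.mk (isIsomorphicSetoid (SymObj A n)) (repS q) = q) :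
    ∑ᶠ q : Quotient (isIsomorphicSetoid (SymObj A n)),
        (Nat.card (repS q ⟶ repS q) : ℂ)⁻¹ * ∏ i : Fin n, φ ((repS q).obj i) =
      (n.factorial : ℂ)⁻¹ *
        (∑ᶠ q : Quotient (isIsomorphicSetoid A),
          (Nat.card (repA q ⟶ repA q) : ℂ)⁻¹ * φ (repA q)) ^ n := by
    classical
  have hfin : ∀ u v : A, Finite (u ⟶ v) := homFinite
  letI : Fintype (_root_.Quotient (isIsomorphicSetoid A)) := Fintype.ofFinite _
  letI : Fintype (_root_.Quotient (isIsomorphicSetoid (SymObj A n))) := Fintype.ofFinite _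
  rw [finsum_eq_sum_of_fintype, finsum_eq_sum_of_fintype]
  have hpow : (∑ q : _root_.Quotient (isIsomorphicSetoid A),
        (Nat.card (repA q ⟶ repA q) : ℂ)⁻¹ * φ (repA q)) ^ n =
      ∑ c : Fin n → _root_.Quotient (isIsomorphicSetoid A),
        ∏ i, ((Nat.card (repA (c i) ⟶ repA (c i)) : ℂ)⁻¹ * φ (repA (c i))) := by
    have h1 : (∑ q : _root_.Quotient (isIsomorphicSetoid A),
        (Nat.card (repA q ⟶ repA q) : ℂ)⁻¹ * φ (repA q)) ^ n =
        ∏ _i : Fin n, (∑ q : _root_.Quotient (isIsomorphicSetoid A),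
          (Nat.card (repA q ⟶ repA q) : ℂ)⁻¹ * φ (repA q)) := by
      rw [Finset.prod_const, Finset.card_univ, Fintype.card_fin]
    rw [h1, Finset.prod_univ_sum]
    rw [Fintype.piFinset_univ]
  rw [hpow]
  have hfibsum : ∑ c : Fin n → _root_.Quotient (isIsomorphicSetoid A),
      ∏ i, ((Nat.card (repA (c i) ⟶ repA (c i)) : ℂ)⁻¹ * φ (repA (c i))) =
      ∑ q : _root_.Quotient (isIsomorphicSetoid (SymObj A n)),
        ∑ c ∈ Finset.univ.filter (fun c : Fin n → _root_.Quotient (isIsomorphicSetoid A) =>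
            Quotient.mk (isIsomorphicSetoid (SymObj A n)) ⟨fun i => repA (c i)⟩ = q),
          ∏ i, ((Nat.card (repA (c i) ⟶ repA (c i)) : ℂ)⁻¹ * φ (repA (c i))) := by
    exact (Finset.sum_fiberwise Finset.univ
      (fun c : Fin n → _root_.Quotient (isIsomorphicSetoid A) =>
        Quotient.mk (isIsomorphicSetoid (SymObj A n)) ⟨fun i => repA (c i)⟩)
      (fun c => ∏ i, ((Nat.card (repA (c i) ⟶ repA (c i)) : ℂ)⁻¹ * φ (repA (c i))))).symm
  rw [hfibsum, Finset.mul_sum]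
  refine Finset.sum_congr rfl fun q _ => ?_
  have := keyFiber φ hφ repA hrepA (repS q)
  rw [hrepS q] at this
  exact this
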